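/- Let M = ∑_{n≥0} m(n)·zⁿ ∈ ℚ⟦z⟧ be the ordinary generating function of peakless Motzkin paths, and let C ∈ ℚ⟦z⟧ be the unique power series with M = 1 + z·C (it exists since M has constant term 1). Then C satisfies the identity C·((1 − z)·(1 − z³·C) − z) = 1 − z − z³·C in ℚ⟦z⟧, which encodes the periodic continued fraction M = 1 + z/(1 − z/(1 − z/(1 − z³/(1 − z/(1 − z/(1 − z³/(1 − ···))))))). -/

import Mathlib

/-!
A peakless Motzkin path of positive length either starts with a flat step followed by a peakless
Motzkin path, or splits at its first return to level `0` as `U v D w` with `v` and `w` peakless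
Motzkin paths and `v` nonempty (an empty `v` would make `U D` a peak). Hence the generating
function satisfies `M = 1 + z M + z² (M - 1) M`. Substituting `M = 1 + z C` and cancelling `z`
gives `C = 1 + z C + z² C + z³ C²`, and multiplying by `1 - z` gives the identity.
-/

/-- Steps of a Motzkin path: up, down, flat. -/
inductive Step : Type
  | U : Step
  | D : Step
  | F : Step
  deriving DecidableEq

instance : Fintype Step :=
  ⟨{Step.U, Step.D, Step.F}, fun x => by cases x <;> simp⟩

/-- The value (vertical displacement) of a step. -/
def Step.val : Step → ℤ
  | .U => 1
  | .D => -1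
  | .F => 0

/-- The partial sum of the first `i` step values of the word `w`. -/
def psum {n : ℕ} (w : Fin n → Step) (i : ℕ) : ℤ :=
  ∑ j : Fin n, if (j : ℕ) < i then (w j).val else 0

/-- A word is peakless if no up-step is immediately followed by a down-step. -/
def Peakless {n : ℕ} (w : Fin n → Step) : Prop :=
  ∀ i : ℕ, ∀ h : i + 1 < n,
    ¬(w ⟨i, Nat.lt_of_succ_lt h⟩ = Step.U ∧ w ⟨i + 1, h⟩ = Step.D)

/-- `w` is a peakless Motzkin path from level `0` to level `k`:
all partial sums are nonnegative, the total sum is `k`, and there is no peak. -/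
def IsPeaklessMotzkinTo {n : ℕ} (w : Fin n → Step) (k : ℤ) : Prop :=
  (∀ i : ℕ, 0 ≤ psum w i) ∧ psum w n = k ∧ Peakless w

/-- The height of a path: the maximum of its partial sums (0 for the empty path). -/
def height {n : ℕ} (w : Fin n → Step) : ℤ :=
  (Finset.range (n + 1)).sup' Finset.nonempty_range_add_one (psum w)

/-- `mTo n k`: the number of peakless Motzkin paths of length `n` from level `0` to level `k`. -/
noncomputable def mTo (n : ℕ) (k : ℤ) : ℕ :=
  Nat.card {w : Fin n → Step // IsPeaklessMotzkinTo w k}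

/-- `m n`: the number of peakless Motzkin paths of length `n`. -/
noncomputable def m (n : ℕ) : ℕ := mTo n 0

/-- `A n ℓ`: the number of peakless Motzkin paths of length `n` of height at most `ℓ`. -/
noncomputable def A (n ℓ : ℕ) : ℕ :=
  Nat.card {w : Fin n → Step // IsPeaklessMotzkinTo w 0 ∧ height w ≤ (ℓ : ℤ)}

lemma Step.neg_one_le_val (s : Step) : -1 ≤ s.val := by
  cases s <;> decide

lemma Step.eq_D_of_val_neg {s : Step} (h : s.val < 0) : s = .D := by
  cases s <;> simp_all [Step.val]

namespace PeaklessMotzkin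

open List PowerSeries Finset

def level (l : List Step) : ℤ := (l.map Step.val).sum

@[simp] lemma level_nil : level [] = 0 := rfl

@[simp] lemma level_cons (s : Step) (l : List Step) : level (s :: l) = s.val + level l := rfl

@[simp] lemma level_append (l₁ l₂ : List Step) :
    level (l₁ ++ l₂) = level l₁ + level l₂ := by
  simp [level]

def PrefixNonneg (l : List Step) : Prop := ∀ k, 0 ≤ level (l.take k)

def NoPeak (a b : Step) : Prop := ¬(a = .U ∧ b = .D)

def IsPath (l : List Step) : Prop := PrefixNonneg l ∧ level l = 0 ∧ l.IsChain NoPeak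

def paths (n : ℕ) : Set (List Step) := {l | IsPath l ∧ l.length = n}

lemma level_take_ofFn {n : ℕ} (w : Fin n → Step) (i : ℕ) :
    level ((ofFn w).take i) = psum w i := by
  rw [level, map_take, map_ofFn, sum_take_ofFn, Finset.sum_filter]
  rfl

lemma isPeaklessMotzkinTo_zero_iff {n : ℕ} (w : Fin n → Step) :
    IsPeaklessMotzkinTo w 0 ↔ IsPath (ofFn w) := by
  have hlevel : level (ofFn w) = psum w n := by
    rw [← level_take_ofFn, take_of_length_le (by simp)]
  simp only [IsPeaklessMotzkinTo, IsPath, PrefixNonneg, level_take_ofFn, hlevel, Peakless,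
    NoPeak, isChain_ofFn]

lemma card_subtype_ofFn {α : Type*} (p : List α → Prop) (n : ℕ) :
    Nat.card {w : Fin n → α // p (ofFn w)} = Nat.card {l : List α // p l ∧ l.length = n} := by
  have ofFn_get (l : {l : List α // p l ∧ l.length = n}) :
      ofFn (fun i : Fin n => l.1[i.cast l.2.2.symm]) = l.1 :=
    ext_getElem (by simp [l.2.2]) (by simp)
  exact Nat.card_congr
    { toFun w := ⟨ofFn w.1, w.2, length_ofFn⟩
      invFun l := ⟨_, (ofFn_get l).symm ▸ l.2.1⟩
      left_inv w := by ext; simp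
      right_inv l := Subtype.ext (ofFn_get l) }

lemma m_eq_card_paths (n : ℕ) : m n = Nat.card (paths n) := by
  simp only [m, mTo, isPeaklessMotzkinTo_zero_iff]
  exact card_subtype_ofFn IsPath n

instance (n : ℕ) : Finite (paths n) :=
  ((finite_length_eq Step n).subset fun _ hl => hl.2).to_subtype

lemma prefixNonneg_cons_iff {s : Step} {l : List Step} :
    PrefixNonneg (s :: l) ↔ ∀ k, 0 ≤ s.val + level (l.take k) := by
  refine ⟨fun h k => by simpa using h (k + 1), ?_⟩
  rintro h (_ | k)
  · simp
  · simpa using h k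

lemma neg_one_le_level_take_cons (s : Step) {l : List Step} (hl : PrefixNonneg l) (k : ℕ) :
    -1 ≤ level ((s :: l).take k) := by
  cases k with
  | zero => simp
  | succ k => simpa using add_le_add s.neg_one_le_val (hl k)

lemma isPath_F_cons_iff {l : List Step} : IsPath (.F :: l) ↔ IsPath l := by
  simp only [IsPath, prefixNonneg_cons_iff, level_cons, isChain_cons]
  simp [PrefixNonneg, Step.val, NoPeak]

lemma PrefixNonneg.head_ne_D {l : List Step} (hl : PrefixNonneg l) :
    ∀ s ∈ l.head?, s ≠ .D := by
  rintro s hs rfl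
  cases l with
  | nil => simp at hs
  | cons a l =>
    obtain rfl : a = .D := by simpa using hs
    simpa [Step.val] using hl 1

lemma PrefixNonneg.getLast_ne_U {l : List Step} (hl : PrefixNonneg l) (h0 : level l = 0) :
    ∀ s ∈ l.getLast?, s ≠ .U := by
  rintro s hs rfl
  obtain rfl | ⟨u, a, rfl⟩ := eq_nil_or_concat l
  · simp at hs
  · obtain rfl : a = .U := by simpa using hs
    have := hl u.length
    simp [Step.val] at this h0
    omega

lemma IsPath.arch {v w : List Step} (hv : IsPath v) (hne : v ≠ []) (hw : IsPath w) :
    IsPath (.U :: v ++ .D :: w) := by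
  obtain ⟨hvn, hv0, hvc⟩ := hv
  obtain ⟨hwn, hw0, hwc⟩ := hw
  refine ⟨?_, by simp [hv0, hw0, Step.val], ?_⟩
  · rw [cons_append, prefixNonneg_cons_iff]
    intro k
    have := hvn k
    have := neg_one_le_level_take_cons .D hwn (k - v.length)
    rw [take_append, level_append]
    simp only [Step.val]
    omega
  · refine isChain_append.2 ⟨hvc.cons fun s hs => (hvn.head_ne_D s hs ·.2), hwc.cons ?_, ?_⟩
    · simp [NoPeak]
    · simpa [getLast?_cons, getLast?_eq_some_getLast hne, NoPeak] using
        hvn.getLast_ne_U hv0 _ (getLast?_eq_some_getLast hne)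

lemma exists_first_return {t : List Step} (hge : ∀ k, -1 ≤ level (t.take k))
    (ht : level t = -1) :
    ∃ v w, t = v ++ .D :: w ∧ PrefixNonneg v ∧ level v = 0 ∧ PrefixNonneg w := by
  have hex : ∃ j, level (t.take (j + 1)) < 0 :=
    ⟨t.length, by rw [take_of_length_le (by omega)]; omega⟩
  obtain ⟨j, hneg, hmin⟩ : ∃ j, level (t.take (j + 1)) < 0 ∧ ∀ i ≤ j, 0 ≤ level (t.take i) := by
    refine ⟨Nat.find hex, Nat.find_spec hex, ?_⟩
    rintro (_ | i) hi
    · simp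
    · exact not_lt.1 (Nat.find_min hex (by omega))
  have hjt : j < t.length := by
    by_contra h
    have := hmin j le_rfl
    rw [take_of_length_le (by omega)] at this hneg
    omega
  obtain ⟨v, d, w, rfl, rfl⟩ : ∃ v d w, t = v ++ d :: w ∧ v.length = j :=
    ⟨_, _, _, (take_append_drop j t).symm.trans (by rw [drop_eq_getElem_cons hjt]),
      by simp; omega⟩
  have hv : PrefixNonneg v := by
    intro i
    rcases le_or_gt i v.length with hij | hij
    · simpa [take_append_of_le_length hij] using hmin i hij
    · simpa [take_of_length_le hij.le] using hmin _ le_rfl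
  have hv_nonneg : 0 ≤ level v := by simpa using hv v.length
  rw [take_length_add_append] at hneg
  have hd : d.val < 0 := by simp at hneg; omega
  obtain rfl := Step.eq_D_of_val_neg hd
  have hv0 : level v = 0 := by simp [Step.val] at hneg; omega
  refine ⟨v, w, rfl, hv, hv0, fun i => ?_⟩
  have := hge (v.length + (i + 1))
  simp [take_length_add_append, hv0, Step.val] at this
  omega

lemma exists_of_isPath_U_cons {t : List Step} (h : IsPath (.U :: t)) :
    ∃ v w, IsPath v ∧ v ≠ [] ∧ IsPath w ∧ t = v ++ .D :: w := by
  obtain ⟨hnn, h0, hc⟩ := h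
  have ht : level t = -1 := by simp [Step.val] at h0; omega
  obtain ⟨v, w, rfl, hvn, hv0, hwn⟩ := exists_first_return
    (fun k => by have := prefixNonneg_cons_iff.1 hnn k; simp only [Step.val] at this; omega) ht
  have hw0 : level w = 0 := by simp [hv0, Step.val] at ht; omega
  rw [← cons_append, isChain_append] at hc
  have hne : v ≠ [] := by rintro rfl; simp [NoPeak] at hc
  exact ⟨v, w, ⟨hvn, hv0, hc.1.tail⟩, hne, ⟨hwn, hw0, hc.2.1.tail⟩, rfl⟩

lemma length_le_of_append_D_cons_eq {v₁ w₁ v₂ w₂ : List Step} (hv₁ : level v₁ = 0)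
    (hv₂ : PrefixNonneg v₂) (h : v₁ ++ .D :: w₁ = v₂ ++ .D :: w₂) : v₂.length ≤ v₁.length := by
  by_contra! hlt
  have := hv₂ (v₁.length + 1)
  rw [← take_append_of_le_length (l₂ := .D :: w₂) (show v₁.length + 1 ≤ v₂.length by omega),
    ← h, take_length_add_append] at this
  simp [hv₁, Step.val] at this

lemma eq_of_append_D_cons_eq {v₁ w₁ v₂ w₂ : List Step} (hn₁ : PrefixNonneg v₁)
    (hv₁ : level v₁ = 0) (hn₂ : PrefixNonneg v₂) (hv₂ : level v₂ = 0)
    (h : v₁ ++ .D :: w₁ = v₂ ++ .D :: w₂) : v₁ = v₂ ∧ w₁ = w₂ := by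
  obtain ⟨rfl, hw⟩ := append_inj h <| le_antisymm
    (length_le_of_append_D_cons_eq hv₂ hn₁ h.symm) (length_le_of_append_D_cons_eq hv₁ hn₂ h)
  exact ⟨rfl, (cons_inj_right _).1 hw⟩

lemma isPath_nil : IsPath [] := ⟨fun k => by simp, rfl, isChain_nil⟩

lemma paths_zero : paths 0 = {[]} := by
  ext l
  simp only [paths, Set.mem_ofPred_eq, length_eq_zero_iff, Set.mem_singleton_iff]
  exact ⟨And.right, fun h => ⟨h ▸ isPath_nil, h⟩⟩

lemma paths_one : paths 1 = {[.F]} := by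
  ext l
  simp only [paths, Set.mem_ofPred_eq, length_eq_one_iff, Set.mem_singleton_iff]
  refine ⟨?_, fun h => ⟨h ▸ isPath_F_cons_iff.2 isPath_nil, _, h⟩⟩
  rintro ⟨⟨-, h0, -⟩, a, rfl⟩
  cases a <;> simp_all [Step.val]

def consOrArch (n : ℕ) :
    paths (n + 1) ⊕ (Σ p : antidiagonal n, ↥{v ∈ paths p.1.1 | v ≠ []} × paths p.1.2) →
      paths (n + 2)
  | .inl l => ⟨.F :: l, isPath_F_cons_iff.2 l.2.1, by simp [l.2.2]⟩
  | .inr ⟨p, v, w⟩ => ⟨.U :: v ++ .D :: w, v.2.1.1.arch v.2.2 w.2.1, by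
      have := mem_antidiagonal.1 p.2
      simp [v.2.1.2, w.2.2]
      omega⟩

lemma consOrArch_bijective (n : ℕ) : Function.Bijective (consOrArch n) := by
  constructor
  · intro x y h
    replace h := congrArg Subtype.val h
    rcases x with ⟨l₁, _⟩ | ⟨p₁, ⟨v₁, ⟨hv₁, hl₁⟩, _⟩, ⟨w₁, _, hm₁⟩⟩ <;>
    rcases y with ⟨l₂, _⟩ | ⟨p₂, ⟨v₂, ⟨hv₂, hl₂⟩, _⟩, ⟨w₂, _, hm₂⟩⟩ <;>
      simp only [consOrArch, cons_append, cons.injEq, reduceCtorEq, false_and, true_and] at h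
    · simp [h]
    · obtain ⟨rfl, rfl⟩ := eq_of_append_D_cons_eq hv₁.1 hv₁.2.1 hv₂.1 hv₂.2.1 h
      obtain rfl : p₁ = p₂ := Subtype.ext (Prod.ext (hl₁.symm.trans hl₂) (hm₁.symm.trans hm₂))
      rfl
  · rintro ⟨_ | ⟨s, t⟩, hl, hlen⟩
    · simp at hlen
    · cases s with
      | F => exact ⟨.inl ⟨t, isPath_F_cons_iff.1 hl, by simpa using hlen⟩, rfl⟩
      | D => simpa [Step.val] using hl.1 1
      | U =>
        obtain ⟨v, w, hv, hne, hw, rfl⟩ := exists_of_isPath_U_cons hl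
        refine ⟨.inr ⟨⟨(v.length, w.length), ?_⟩, ⟨v, ⟨hv, rfl⟩, hne⟩, ⟨w, hw, rfl⟩⟩, rfl⟩
        simp at hlen ⊢
        omega

lemma card_paths_add_two (n : ℕ) :
    Nat.card (paths (n + 2)) = Nat.card (paths (n + 1)) +
      ∑ p ∈ antidiagonal n, Nat.card ↥{v ∈ paths p.1 | v ≠ []} * Nat.card (paths p.2) := by
  rw [← Nat.card_eq_of_bijective _ (consOrArch_bijective n), Nat.card_sum, Nat.card_sigma]
  simp only [Nat.card_prod]
  exact congrArg _ <| sum_coe_sort (antidiagonal n) fun p =>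
    Nat.card ↥{v ∈ paths p.1 | v ≠ []} * Nat.card (paths p.2)

noncomputable def gf : ℚ⟦X⟧ := mk fun n => (Nat.card (paths n) : ℚ)

lemma coeff_gf_sub_one (i : ℕ) :
    coeff i (gf - 1) = (Nat.card ↥{v ∈ paths i | v ≠ []} : ℚ) := by
  rw [gf, map_sub, coeff_mk, coeff_one]
  cases i with
  | zero => simp [paths_zero]
  | succ i =>
    have : {v ∈ paths (i + 1) | v ≠ []} = paths (i + 1) :=
      Set.sep_eq_self_iff_mem_true.2 fun v hv => ne_nil_of_length_pos (by rw [hv.2]; omega)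
    simp [this]

theorem gf_eq : gf = 1 + X * gf + X ^ 2 * ((gf - 1) * gf) := by
  ext (_ | _ | n)
  · simp [gf, paths_zero]
  · simp [gf, paths_zero, paths_one, coeff_one, pow_two, mul_assoc]
  · rw [map_add, map_add, coeff_succ_X_mul, coeff_X_pow_mul', if_pos (by omega), coeff_mul]
    simp only [coeff_gf_sub_one]
    simp only [gf, coeff_mk, coeff_one, card_paths_add_two]
    push_cast
    simp

end PeaklessMotzkin

/-- Writing `M = 1 + z·C` for the generating function `M = ∑ m(n) zⁿ` of peakless Motzkin
paths, the series `C` satisfies `C·((1 − z)·(1 − z³·C) − z) = 1 − z − z³·C` in `ℚ⟦z⟧`,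
which encodes the periodic continued fraction
`M = 1 + z/(1 − z/(1 − z/(1 − z³/(1 − z/(1 − z/(1 − z³/(1 − ⋯)))))))`. -/
theorem peakless_gf_periodic_continued_fraction (C : PowerSeries ℚ)
    (hC : (PowerSeries.mk fun n => (m n : ℚ)) = 1 + PowerSeries.X * C) :
    C * ((1 - PowerSeries.X) * (1 - PowerSeries.X ^ 3 * C) - PowerSeries.X)
      = 1 - PowerSeries.X - PowerSeries.X ^ 3 * C := by
  have hgf : PeaklessMotzkin.gf = 1 + PowerSeries.X * C := by
    simpa only [PeaklessMotzkin.gf, PeaklessMotzkin.m_eq_card_paths] using hC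
  have hC_eq :
      C = 1 + PowerSeries.X * C + PowerSeries.X ^ 2 * C + PowerSeries.X ^ 3 * C ^ 2 := by
    have h := PeaklessMotzkin.gf_eq
    rw [hgf] at h
    refine mul_left_cancel₀ PowerSeries.X_ne_zero ?_
    linear_combination h
  linear_combination (1 - PowerSeries.X) * hC_eq
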